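/- The Ramanujan polynomials R_n(q) = Σ_{k=0}^{n-1} r(n,k)q^k, where the coefficients r(n,k) satisfy r(1,0) = 1, r(n,k) = 0 unless n ≥ 1 and 0 ≤ k ≤ n−1, and r(n,k) = (n−1)·r(n-1,k) + (n+k−2)·r(n-1,k-1), form a strongly q-log-convex sequence: for all n ≥ m ≥ 2, the polynomial R_{m-1}(q)·R_{n+1}(q) − R_m(q)·R_n(q) has only nonnegative coefficients. -/

import Mathlib

/-!
The recurrence reads `R_{n+1} = n (1 + q) R_n + q² R_n'` for `n ≥ 1`, hence for `1 ≤ a ≤ b`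
`R_a R_{b+1} - R_{a+1} R_b = (b - a) (1 + q) R_a R_b + q² W(R_a, R_b)` with `W` the Wronskian.
The coefficient of `q^N` in `q W(R_a, R_b)` is `∑_{i+j=N} (j - i) r(a,i) r(b,j)`; pairing `(i, j)`
with `(j, i)` shows it is nonnegative as soon as `r(a,j) r(b,i) ≤ r(a,i) r(b,j)` for `i ≤ j`.
This inequality between rows, strengthened to `r(a,j+t) r(b,i) ≤ r(a,i+t) r(b,j)` so that it
survives the recurrence, follows by induction: first along the diagonal `a = b`, then in `b`.
-/

open Polynomial

/-- The number `r(n,k)` of rooted labeled trees on `n` vertices with `k` improper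
edges: `r(1,0) = 1`, `r(n,k) = 0` unless `n ≥ 1` and `0 ≤ k ≤ n−1`, and
`r(n,k) = (n−1)·r(n-1,k) + (n+k−2)·r(n-1,k-1)`. -/
def ramanujanCoeff : ℕ → ℕ → ℕ
  | 0, _ => 0
  | 1, 0 => 1
  | 1, _ + 1 => 0
  | m + 2, 0 => (m + 1) * ramanujanCoeff (m + 1) 0
  | m + 2, k + 1 => (m + 1) * ramanujanCoeff (m + 1) (k + 1)
      + (m + k + 1) * ramanujanCoeff (m + 1) k

/-- The Ramanujan polynomial `R_n(q) = Σ_{k=0}^{n-1} r(n,k) q^k`. -/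
noncomputable def ramanujanPoly (n : ℕ) : Polynomial ℝ :=
  ∑ k ∈ Finset.range n, C ((ramanujanCoeff n k : ℝ)) * X ^ k

open Finset

namespace Polynomial

theorem coeff_X_mul_derivative {R : Type*} [Semiring R] (p : R[X]) (n : ℕ) :
    (X * derivative p).coeff n = n * p.coeff n := by
  rcases n with _ | n
  · simp
  · rw [coeff_X_mul, coeff_derivative, ← Nat.cast_succ, Nat.cast_comm]

theorem coeff_X_mul_wronskian {R : Type*} [CommRing R] (p q : R[X]) (n : ℕ) :
    (X * wronskian p q).coeff n =
      ∑ x ∈ antidiagonal n, ((x.2 : R) - x.1) * (p.coeff x.1 * q.coeff x.2) := by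
  have h : X * wronskian p q = p * (X * derivative q) - X * derivative p * q := by
    rw [wronskian]
    ring
  rw [h, coeff_sub, coeff_mul, coeff_mul, ← sum_sub_distrib]
  refine sum_congr rfl fun x _ => ?_
  rw [coeff_X_mul_derivative, coeff_X_mul_derivative]
  ring

section OrderedSemiring

variable {R : Type*} [Semiring R] [PartialOrder R] [IsOrderedRing R]

def CoeffsNonneg (p : R[X]) : Prop := ∀ n, 0 ≤ p.coeff n

theorem CoeffsNonneg.add {p q : R[X]} (hp : CoeffsNonneg p) (hq : CoeffsNonneg q) :
    CoeffsNonneg (p + q) := fun n => by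
  rw [coeff_add]
  exact add_nonneg (hp n) (hq n)

theorem CoeffsNonneg.mul {p q : R[X]} (hp : CoeffsNonneg p) (hq : CoeffsNonneg q) :
    CoeffsNonneg (p * q) := fun n => by
  rw [coeff_mul]
  exact sum_nonneg fun x _ => mul_nonneg (hp x.1) (hq x.2)

theorem coeffsNonneg_natCast (m : ℕ) : CoeffsNonneg (m : R[X]) := fun n => by
  rw [coeff_natCast_ite]
  split_ifs <;> simp

theorem coeffsNonneg_one : CoeffsNonneg (1 : R[X]) := by
  simpa using coeffsNonneg_natCast (R := R) 1

theorem coeffsNonneg_X : CoeffsNonneg (X : R[X]) := fun n => by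
  rw [coeff_X]
  split_ifs <;> simp

end OrderedSemiring

theorem CoeffsNonneg.X_mul_wronskian {R : Type*} [CommRing R] [LinearOrder R]
    [IsStrictOrderedRing R] {p q : R[X]}
    (h : ∀ i j, i ≤ j → p.coeff j * q.coeff i ≤ p.coeff i * q.coeff j) :
    CoeffsNonneg (X * wronskian p q) := by
  intro n
  rw [coeff_X_mul_wronskian]
  set f : ℕ × ℕ → R := fun x => ((x.2 : R) - x.1) * (p.coeff x.1 * q.coeff x.2)
  have hpair (x : ℕ × ℕ) : 0 ≤ f x + f x.swap := by
    obtain ⟨i, j⟩ := x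
    have hf : f (i, j) + f (i, j).swap =
        ((j : R) - i) * (p.coeff i * q.coeff j - p.coeff j * q.coeff i) := by
      simp only [f, Prod.swap]
      ring
    rw [hf]
    rcases le_total i j with hij | hji
    · exact mul_nonneg (sub_nonneg.2 (by exact_mod_cast hij)) (sub_nonneg.2 (h i j hij))
    · exact mul_nonneg_of_nonpos_of_nonpos (sub_nonpos.2 (by exact_mod_cast hji))
        (sub_nonpos.2 (h j i hji))
  have htwice : 0 ≤ 2 * ∑ x ∈ antidiagonal n, f x := by
    rw [two_mul]
    nth_rewrite 2 [← Nat.sum_antidiagonal_swap]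
    rw [← sum_add_distrib]
    exact sum_nonneg fun x _ => hpair x
  linarith

end Polynomial

theorem ramanujanCoeff_eq_zero_of_le : ∀ {n k : ℕ}, n ≤ k → ramanujanCoeff n k = 0
  | 0, _, _ => rfl
  | 1, _ + 1, _ => rfl
  | n + 2, k + 1, h => by
    rw [ramanujanCoeff, ramanujanCoeff_eq_zero_of_le (by omega),
      ramanujanCoeff_eq_zero_of_le (by omega : n + 1 ≤ k), mul_zero, mul_zero, add_zero]

def ramanujanStep (c : ℕ) (u : ℕ → ℕ) : ℕ → ℕ
  | 0 => c * u 0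
  | k + 1 => c * u (k + 1) + (c + k) * u k

theorem ramanujanCoeff_succ {n : ℕ} (hn : 1 ≤ n) :
    ramanujanCoeff (n + 1) = ramanujanStep n (ramanujanCoeff n) := by
  obtain ⟨m, rfl⟩ := Nat.exists_eq_add_of_le' hn
  funext k
  rcases k with _ | k
  · rfl
  · simp only [ramanujanCoeff, ramanujanStep]
    ring

/-- The ratio `u (k + t) / v k` is antitone in `k` for every shift `t`, stated without division
so that zeros are allowed. For `u = v` this is log-concavity without internal zeros. -/
def ShiftRatioAntitone (u v : ℕ → ℕ) : Prop :=
  ∀ t i j, i ≤ j → u (j + t) * v i ≤ u (i + t) * v j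

namespace ShiftRatioAntitone

variable {u v : ℕ → ℕ}

theorem mul_le (h : ShiftRatioAntitone u v) (t : ℕ) {i j k l : ℕ} (hij : i ≤ j) (hk : j + t = k)
    (hl : i + t = l) : u k * v i ≤ u l * v j := by
  subst hk hl
  exact h t i j hij

theorem ramanujanStep_right (h : ShiftRatioAntitone u v) (c : ℕ) :
    ShiftRatioAntitone u (ramanujanStep c v) := by
  intro t i j hij
  rcases i with _ | i <;> rcases j with _ | j
  · exact le_rfl
  · calc u (j + 1 + t) * (c * v 0)
        = c * (u (j + 1 + t) * v 0) := by ring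
      _ ≤ c * (u (0 + t) * v (j + 1)) := Nat.mul_le_mul_left c (h t 0 (j + 1) hij)
      _ ≤ c * (u (0 + t) * v (j + 1)) + u (0 + t) * ((c + j) * v j) := Nat.le_add_right _ _
      _ = u (0 + t) * (c * v (j + 1) + (c + j) * v j) := by ring
  · omega
  · have hshift : u (j + 1 + t) * v i ≤ u (i + 1 + t) * v j :=
      h.mul_le (t + 1) (by omega) (by omega) (by omega)
    calc u (j + 1 + t) * (c * v (i + 1) + (c + i) * v i)
        = c * (u (j + 1 + t) * v (i + 1)) + (c + i) * (u (j + 1 + t) * v i) := by ring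
      _ ≤ c * (u (i + 1 + t) * v (j + 1)) + (c + j) * (u (i + 1 + t) * v j) :=
        add_le_add (Nat.mul_le_mul_left c (h t (i + 1) (j + 1) hij))
          (Nat.mul_le_mul (by omega) hshift)
      _ = u (i + 1 + t) * (c * v (j + 1) + (c + j) * v j) := by ring

theorem ramanujanStep_self (h : ShiftRatioAntitone u u) (c : ℕ) :
    ShiftRatioAntitone (ramanujanStep c u) (ramanujanStep c u) := by
  intro t i j hij
  rcases t with _ | t
  · rw [add_zero, add_zero, mul_comm]
  rcases i with _ | i <;> rcases j with _ | j
  · exact le_rfl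
  · rw [show j + 1 + (t + 1) = j + t + 2 by ring, zero_add]
    have hA : u (j + t + 2) * u 0 ≤ u (t + 1) * u (j + 1) :=
      h.mul_le (t + 1) hij (by omega) (zero_add _)
    have hB : u (j + t + 1) * u 0 ≤ u (t + 1) * u j :=
      h.mul_le (t + 1) (by omega) (by omega) (zero_add _)
    have hC : u (j + t + 1) * u 0 ≤ u t * u (j + 1) := h.mul_le t hij (by omega) (by omega)
    have hcoeff : c * (t + 1) ≤ c * (c + t) := by nlinarith [Nat.le_mul_self c]
    calc (c * u (j + t + 2) + (c + (j + t + 1)) * u (j + t + 1)) * (c * u 0)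
        = c * c * (u (j + t + 2) * u 0) + c * (c + j) * (u (j + t + 1) * u 0)
          + c * (t + 1) * (u (j + t + 1) * u 0) := by ring
      _ ≤ c * c * (u (t + 1) * u (j + 1)) + c * (c + j) * (u (t + 1) * u j)
          + c * (c + t) * (u t * u (j + 1)) :=
        add_le_add (add_le_add (Nat.mul_le_mul_left _ hA) (Nat.mul_le_mul_left _ hB))
          (Nat.mul_le_mul hcoeff hC)
      _ ≤ c * c * (u (t + 1) * u (j + 1)) + c * (c + j) * (u (t + 1) * u j)
          + c * (c + t) * (u t * u (j + 1)) + (c + t) * (c + j) * (u t * u j) :=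
        Nat.le_add_right _ _
      _ = (c * u (t + 1) + (c + t) * u t) * (c * u (j + 1) + (c + j) * u j) := by ring
  · omega
  · rcases (Nat.succ_le_succ_iff.1 hij).eq_or_lt with rfl | hlt
    · exact le_rfl
    obtain ⟨d, hd⟩ := Nat.exists_eq_add_of_lt hlt
    rw [show j + 1 + (t + 1) = j + t + 2 by ring, show i + 1 + (t + 1) = i + t + 2 by ring]
    have hA : u (j + t + 2) * u (i + 1) ≤ u (i + t + 2) * u (j + 1) :=
      h.mul_le (t + 1) (by omega) (by omega) (by omega)
    have hB : u (j + t + 2) * u i ≤ u (i + t + 2) * u j := h.mul_le (t + 2) hlt.le rfl rfl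
    have hC : u (j + t + 1) * u (i + 1) ≤ u (i + t + 1) * u (j + 1) :=
      h.mul_le t (by omega) (by omega) (by omega)
    have hC' : u (j + t + 1) * u (i + 1) ≤ u (i + t + 2) * u j :=
      h.mul_le (t + 1) hlt (by omega) (by omega)
    have hD : u (j + t + 1) * u i ≤ u (i + t + 1) * u j := h.mul_le (t + 1) hlt.le rfl rfl
    have hcoeff : (c + (j + t + 1)) * (c + i) ≤ (c + (i + t + 1)) * (c + j) := by
      subst hd
      nlinarith
    -- `c (c + j + t + 1) = c (c + i + t + 1) + c (d + 1)`; `hC'` moves the second part into the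
    -- `u (i + t + 2) * u j` term, whose coefficient `c (c + i)` then grows to `c (c + j)`.
    calc (c * u (j + t + 2) + (c + (j + t + 1)) * u (j + t + 1)) *
          (c * u (i + 1) + (c + i) * u i)
        = c * c * (u (j + t + 2) * u (i + 1)) + c * (c + i) * (u (j + t + 2) * u i)
          + c * (c + (i + t + 1)) * (u (j + t + 1) * u (i + 1))
          + c * (d + 1) * (u (j + t + 1) * u (i + 1))
          + (c + (j + t + 1)) * (c + i) * (u (j + t + 1) * u i) := by
          subst hd
          ring
      _ ≤ c * c * (u (i + t + 2) * u (j + 1)) + c * (c + i) * (u (i + t + 2) * u j)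
          + c * (c + (i + t + 1)) * (u (i + t + 1) * u (j + 1))
          + c * (d + 1) * (u (i + t + 2) * u j)
          + (c + (i + t + 1)) * (c + j) * (u (i + t + 1) * u j) :=
        add_le_add (add_le_add (add_le_add (add_le_add (Nat.mul_le_mul_left _ hA)
          (Nat.mul_le_mul_left _ hB)) (Nat.mul_le_mul_left _ hC)) (Nat.mul_le_mul_left _ hC'))
          (Nat.mul_le_mul hcoeff hD)
      _ = (c * u (i + t + 2) + (c + (i + t + 1)) * u (i + t + 1)) *
          (c * u (j + 1) + (c + j) * u j) := by
          subst hd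
          ring

end ShiftRatioAntitone

theorem shiftRatioAntitone_ramanujanCoeff_self :
    ∀ n, ShiftRatioAntitone (ramanujanCoeff n) (ramanujanCoeff n)
  | 0 => fun _ _ _ _ => le_rfl
  | 1 => fun t i j _ => by
    rcases t with _ | t
    · rw [add_zero, add_zero, mul_comm]
    · rw [ramanujanCoeff_eq_zero_of_le (by omega : 1 ≤ j + (t + 1)), zero_mul]
      exact Nat.zero_le _
  | n + 2 => by
    rw [ramanujanCoeff_succ (by omega)]
    exact (shiftRatioAntitone_ramanujanCoeff_self (n + 1)).ramanujanStep_self (n + 1)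

theorem shiftRatioAntitone_ramanujanCoeff {a b : ℕ} (ha : 1 ≤ a) (hab : a ≤ b) :
    ShiftRatioAntitone (ramanujanCoeff a) (ramanujanCoeff b) := by
  induction b, hab using Nat.le_induction with
  | base => exact shiftRatioAntitone_ramanujanCoeff_self a
  | succ b hab ih =>
    rw [ramanujanCoeff_succ (ha.trans hab)]
    exact ih.ramanujanStep_right b

theorem coeff_ramanujanPoly (n k : ℕ) : (ramanujanPoly n).coeff k = ramanujanCoeff n k := by
  simp only [ramanujanPoly, finsetSum_coeff, coeff_C_mul_X_pow, sum_ite_eq, mem_range]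
  split_ifs with h
  · rfl
  · rw [ramanujanCoeff_eq_zero_of_le (not_lt.1 h), Nat.cast_zero]

theorem coeffsNonneg_ramanujanPoly (n : ℕ) : CoeffsNonneg (ramanujanPoly n) := fun k => by
  rw [coeff_ramanujanPoly]
  positivity

theorem ramanujanPoly_succ {n : ℕ} (hn : 1 ≤ n) :
    ramanujanPoly (n + 1) =
      (n : ℝ[X]) * (1 + X) * ramanujanPoly n + X * (X * derivative (ramanujanPoly n)) := by
  ext k
  rw [coeff_add, mul_assoc, ← C_eq_natCast, coeff_C_mul, add_mul, one_mul, coeff_add]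
  rcases k with _ | k
  · simp only [coeff_X_mul_zero, coeff_ramanujanPoly, ramanujanCoeff_succ hn, ramanujanStep]
    push_cast
    ring
  · simp only [coeff_X_mul, coeff_X_mul_derivative, coeff_ramanujanPoly, ramanujanCoeff_succ hn,
      ramanujanStep]
    push_cast
    ring

theorem ramanujanPoly_mul_succ_sub {a b : ℕ} (ha : 1 ≤ a) (hab : a ≤ b) :
    ramanujanPoly a * ramanujanPoly (b + 1) - ramanujanPoly (a + 1) * ramanujanPoly b =
      ((b - a : ℕ) : ℝ[X]) * (1 + X) * (ramanujanPoly a * ramanujanPoly b) +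
        X * (X * wronskian (ramanujanPoly a) (ramanujanPoly b)) := by
  rw [ramanujanPoly_succ ha, ramanujanPoly_succ (ha.trans hab), wronskian, Nat.cast_sub hab]
  ring

theorem coeffsNonneg_X_mul_wronskian_ramanujanPoly {a b : ℕ} (ha : 1 ≤ a) (hab : a ≤ b) :
    CoeffsNonneg (X * wronskian (ramanujanPoly a) (ramanujanPoly b)) :=
  CoeffsNonneg.X_mul_wronskian fun i j hij => by
    simp only [coeff_ramanujanPoly]
    exact_mod_cast shiftRatioAntitone_ramanujanCoeff ha hab 0 i j hij

/-- The Ramanujan polynomials form a strongly `q`-log-convex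
sequence: for all `n ≥ m ≥ 2`, the polynomial `R_{m-1}·R_{n+1} − R_m·R_n` has
nonnegative coefficients. -/
theorem ramanujanPoly_strongly_q_log_convex :
    ∀ m n : ℕ, 2 ≤ m → m ≤ n →
      ∀ i : ℕ,
        0 ≤ (ramanujanPoly (m - 1) * ramanujanPoly (n + 1)
              - ramanujanPoly m * ramanujanPoly n).coeff i := by
  intro m n hm hmn
  obtain ⟨a, rfl⟩ : ∃ a, m = a + 1 := ⟨m - 1, by omega⟩
  rw [Nat.add_sub_cancel, ramanujanPoly_mul_succ_sub (by omega) (by omega)]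
  have hR := coeffsNonneg_ramanujanPoly
  exact (((coeffsNonneg_natCast _).mul (coeffsNonneg_one.add coeffsNonneg_X)).mul
    ((hR a).mul (hR n))).add
    (coeffsNonneg_X.mul (coeffsNonneg_X_mul_wronskian_ramanujanPoly (by omega) (by omega)))
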